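/- arXiv:1903.11582 — 2 statements merged into one kernel-verified Lean document; each statement's English description precedes it below -/
import Mathlib

section
/- In the discrete balance-point setting: (a) for any j with k₂ ≤ j ≤ k₃ and any indices 1 ≤ i₁ ≤ k₁ and 2 ≤ i₂ ≤ k₁, if (i₁ = 1 or aver(i₁,j) ≥ a_{i₁−1}) and aver(i₂,j) < a_{i₂−1}, then i₁ ≤ i*(j) < i₂; (b) for any j₁, j₂ with k₂ ≤ j₁ < j₂ ≤ k₃ − 1, if aver(i*(j₂), j₂) ≤ a_{j₂+1} and aver(i*(j₁), j₁) > a_{j₁+1}, then j₁ < j* ≤ j₂. -/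
open Finset

/-- `aver a i j = (∑_{l=i}^j a_l)/(j − i + 1)`. -/
noncomputable def aver (a : ℕ → ℝ) (i j : ℕ) : ℝ :=
  (∑ l ∈ Finset.Icc i j, a l) / ((j : ℝ) - (i : ℝ) + 1)

open Classical in
/-- The left balance point `i*(j)`. -/
noncomputable def istar (a : ℕ → ℝ) (k₁ j : ℕ) : ℕ :=
  if h : ((Finset.Icc 2 k₁).filter fun i => aver a i j < a (i - 1)).Nonempty
  then ((Finset.Icc 2 k₁).filter fun i => aver a i j < a (i - 1)).min' h - 1
  else k₁

open Classical in
/-- The right balance point `j*`. -/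
noncomputable def jstar (a : ℕ → ℝ) (k₁ k₂ k₃ : ℕ) : ℕ :=
  if h : ((Finset.Icc k₂ (k₃ - 1)).filter fun j => a (j + 1) < aver a (istar a k₁ j) j).Nonempty
  then ((Finset.Icc k₂ (k₃ - 1)).filter fun j => a (j + 1) < aver a (istar a k₁ j) j).max' h + 1
  else k₂

/-!
Let `S_j` be the set of `i ∈ [2, k₁]` with `aver(i, j) < a_{i-1}`. Since `aver(i, j)` is a weighted
mean of `a_i` and `aver(i+1, j)` and `a` increases on `[1, k₁]`, the set `S_j` is a final segment
of `[2, k₁]`, so `i*(j) < i ↔ i ∈ S_j`; this is (a). The same mean identity shows that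
`i ↦ aver(i, j)` increases up to `i*(j)` and decreases after it, so `i*(j)` maximises `aver(·, j)`
on `[1, k₁]`. Hence `aver(i*(j+1), j) ≤ aver(i*(j), j)`, and appending `a_{j+1}` shows that
`aver(i*(j), j) ≤ a_{j+1}` propagates from `j` to `j + 1` because `a` increases on `[k₂, k₃]`.
So no index of `J` lies at or beyond `j₂`, which is (b).
-/

section Aver

variable {a : ℕ → ℝ} {i j : ℕ}

lemma mul_aver (h : i ≤ j) : ((j : ℝ) - i + 1) * aver a i j = ∑ l ∈ Icc i j, a l := by
  have : ((j : ℝ) - i + 1) ≠ 0 := by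
    have : (i : ℝ) ≤ j := by exact_mod_cast h
    linarith
  rw [aver, mul_div_cancel₀ _ this]

lemma mul_aver_eq_add_mul_aver_succ (h : i < j) :
    ((j : ℝ) - i + 1) * aver a i j = a i + ((j : ℝ) - i) * aver a (i + 1) j := by
  have htail : ((j : ℝ) - i) * aver a (i + 1) j = ∑ l ∈ Icc (i + 1) j, a l := by
    rw [← mul_aver (i := i + 1) h]
    push_cast
    ring
  rw [mul_aver h.le, Icc_eq_cons_Ioc h.le, sum_cons, ← Icc_add_one_left_eq_Ioc, htail]

lemma mul_aver_succ_right (h : i ≤ j) :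
    ((j : ℝ) - i + 2) * aver a i (j + 1) = ((j : ℝ) - i + 1) * aver a i j + a (j + 1) := by
  have hsucc : ((j : ℝ) - i + 2) * aver a i (j + 1) = ∑ l ∈ Icc i (j + 1), a l := by
    rw [← mul_aver (j := j + 1) (by omega)]
    push_cast
    ring
  rw [hsucc, sum_Icc_succ_top (by omega), mul_aver h]

lemma aver_le_aver_succ_iff (h : i < j) :
    aver a i j ≤ aver a (i + 1) j ↔ a i ≤ aver a (i + 1) j := by
  have key := mul_aver_eq_add_mul_aver_succ (a := a) h
  have : (i : ℝ) + 1 ≤ j := by exact_mod_cast h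
  constructor <;> intro <;> nlinarith

lemma aver_succ_lt_aver_iff (h : i < j) :
    aver a (i + 1) j < aver a i j ↔ aver a (i + 1) j < a i := by
  simpa only [not_le] using (aver_le_aver_succ_iff (a := a) h).not

lemma aver_lt_iff_aver_succ_lt (h : i < j) : aver a i j < a i ↔ aver a (i + 1) j < a i := by
  have key := mul_aver_eq_add_mul_aver_succ (a := a) h
  have : (i : ℝ) + 1 ≤ j := by exact_mod_cast h
  constructor <;> intro <;> nlinarith

lemma aver_succ_right_le {c : ℝ} (h : i ≤ j) (hij : aver a i j ≤ c) (hc : a (j + 1) ≤ c) :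
    aver a i (j + 1) ≤ c := by
  have key := mul_aver_succ_right (a := a) h
  have : (i : ℝ) ≤ j := by exact_mod_cast h
  nlinarith

end Aver

section BalancePoints

variable {a : ℕ → ℝ} {i j k₁ k₂ k₃ : ℕ}

lemma aver_lt_pred_of_le {i' : ℕ} (ha : MonotoneOn a (Set.Icc 1 k₁)) (hj : k₁ < j) (hi : 2 ≤ i)
    (hii' : i ≤ i') (hi'k : i' ≤ k₁) (h : aver a i j < a (i - 1)) :
    aver a i' j < a (i' - 1) := by
  induction i', hii' using Nat.le_induction with
  | base => exact h
  | succ n hin ih =>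
    have hpred : a (n - 1) ≤ a n :=
      ha ⟨by omega, by omega⟩ ⟨by omega, by omega⟩ (by omega)
    have hn : aver a n j < a n := (ih (by omega)).trans_le hpred
    simpa using (aver_lt_iff_aver_succ_lt (by omega)).1 hn

lemma one_le_istar (hk₁ : 1 ≤ k₁) : 1 ≤ istar a k₁ j := by
  unfold istar
  split_ifs with h
  · have := (mem_filter.1 (min'_mem _ h)).1
    rw [mem_Icc] at this
    omega
  · exact hk₁

lemma istar_le : istar a k₁ j ≤ k₁ := by
  unfold istar
  split_ifs with h
  · have := (mem_filter.1 (min'_mem _ h)).1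
    rw [mem_Icc] at this
    omega
  · exact le_rfl

lemma istar_lt_iff (ha : MonotoneOn a (Set.Icc 1 k₁)) (hj : k₁ < j) (hi : 2 ≤ i) (hik : i ≤ k₁) :
    istar a k₁ j < i ↔ aver a i j < a (i - 1) := by
  unfold istar
  split_ifs with h
  · obtain ⟨hmin, hmin_lt⟩ := mem_filter.1 (min'_mem _ h)
    rw [mem_Icc] at hmin
    constructor
    · intro hlt
      exact aver_lt_pred_of_le ha hj hmin.1 (by omega) hik hmin_lt
    · intro hlt
      have hmem := (mem_filter (p := fun i => aver a i j < a (i - 1))).2 ⟨mem_Icc.2 ⟨hi, hik⟩, hlt⟩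
      have := min'_le _ i hmem
      omega
  · simp only [not_nonempty_iff_eq_empty, filter_eq_empty_iff, mem_Icc] at h
    exact iff_of_false (by omega) (h ⟨hi, hik⟩)

lemma aver_le_aver_istar (hk₁ : 1 ≤ k₁) (ha : MonotoneOn a (Set.Icc 1 k₁)) (hj : k₁ < j)
    (hi : 1 ≤ i) (hik : i ≤ k₁) : aver a i j ≤ aver a (istar a k₁ j) j := by
  set m := istar a k₁ j
  have hm : 1 ≤ m ∧ m ≤ k₁ := ⟨one_le_istar hk₁, istar_le⟩
  have hmono : MonotoneOn (aver a · j) (Set.Icc 1 m) := by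
    refine monotoneOn_of_le_succ Set.ordConnected_Icc fun l _ hl hl' => ?_
    simp only [Order.succ_eq_add_one, Set.mem_Icc] at hl hl' ⊢
    refine (aver_le_aver_succ_iff (by omega)).2 (not_lt.1 fun hlt => ?_)
    have := (istar_lt_iff (i := l + 1) ha hj (by omega) (by omega)).2 (by simpa using hlt)
    omega
  have hanti : AntitoneOn (aver a · j) (Set.Icc m k₁) := by
    refine antitoneOn_of_succ_le Set.ordConnected_Icc fun l _ hl hl' => ?_
    simp only [Order.succ_eq_add_one, Set.mem_Icc] at hl hl' ⊢
    have := (istar_lt_iff ha hj (by omega) hl'.2).1 (by omega)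
    exact ((aver_succ_lt_aver_iff (by omega)).2 (by simpa using this)).le
  rcases le_total i m with him | hmi
  · exact hmono ⟨hi, him⟩ ⟨hm.1, le_rfl⟩ him
  · exact hanti ⟨le_rfl, hm.2⟩ ⟨hmi, hik⟩ hmi

lemma aver_istar_succ_le (hk₁ : 1 ≤ k₁) (ha : MonotoneOn a (Set.Icc 1 k₁)) (hj : k₁ < j)
    (hstep : a (j + 1) ≤ a (j + 2)) (h : aver a (istar a k₁ j) j ≤ a (j + 1)) :
    aver a (istar a k₁ (j + 1)) (j + 1) ≤ a (j + 2) := by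
  have hi : 1 ≤ istar a k₁ (j + 1) ∧ istar a k₁ (j + 1) ≤ k₁ := ⟨one_le_istar hk₁, istar_le⟩
  have hmax := aver_le_aver_istar hk₁ ha hj hi.1 hi.2
  exact (aver_succ_right_le (by omega) (hmax.trans h) le_rfl).trans hstep

lemma lt_jstar (hj : k₂ ≤ j) (hjk : j + 1 ≤ k₃) (h : a (j + 1) < aver a (istar a k₁ j) j) :
    j < jstar a k₁ k₂ k₃ := by
  have hmem : j ∈ (Icc k₂ (k₃ - 1)).filter fun j => a (j + 1) < aver a (istar a k₁ j) j :=
    mem_filter.2 ⟨mem_Icc.2 ⟨hj, by omega⟩, h⟩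
  rw [jstar, dif_pos ⟨j, hmem⟩]
  exact Nat.lt_succ_of_le (le_max' _ _ hmem)

lemma jstar_le {n : ℕ} (hn : k₂ ≤ n)
    (h : ∀ j, n ≤ j → j ≤ k₃ - 1 → aver a (istar a k₁ j) j ≤ a (j + 1)) :
    jstar a k₁ k₂ k₃ ≤ n := by
  unfold jstar
  split_ifs with hne
  · obtain ⟨hmax, hmax_lt⟩ := mem_filter.1 (max'_mem _ hne)
    rw [mem_Icc] at hmax
    by_contra! hlt
    exact (h _ (by omega) (by omega)).not_gt hmax_lt
  · exact hn

end BalancePoints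

theorem statement7_general
    (k₁ k₂ k₃ : ℕ) (a : ℕ → ℝ)
    (hk₁ : 1 ≤ k₁) (hk₁₂ : k₁ < k₂)
    (hmono1 : ∀ i, 1 ≤ i → i + 1 ≤ k₁ → a i ≤ a (i + 1))
    (hmono3 : ∀ i, k₂ ≤ i → i + 1 ≤ k₃ → a i ≤ a (i + 1)) :
    (∀ j i₁ i₂, k₂ ≤ j → j ≤ k₃ → 1 ≤ i₁ → i₁ ≤ k₁ → 2 ≤ i₂ → i₂ ≤ k₁ →
      (i₁ = 1 ∨ a (i₁ - 1) ≤ aver a i₁ j) → aver a i₂ j < a (i₂ - 1) →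
      i₁ ≤ istar a k₁ j ∧ istar a k₁ j < i₂) ∧
    (∀ j₁ j₂, k₂ ≤ j₁ → j₁ < j₂ → j₂ + 1 ≤ k₃ →
      aver a (istar a k₁ j₂) j₂ ≤ a (j₂ + 1) → a (j₁ + 1) < aver a (istar a k₁ j₁) j₁ →
      j₁ < jstar a k₁ k₂ k₃ ∧ jstar a k₁ k₂ k₃ ≤ j₂) := by
  have ha : MonotoneOn a (Set.Icc 1 k₁) :=
    monotoneOn_of_le_succ Set.ordConnected_Icc fun i _ hi hi' => by
      simp only [Order.succ_eq_add_one, Set.mem_Icc] at hi hi' ⊢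
      exact hmono1 i hi.1 hi'.2
  refine ⟨fun j i₁ i₂ hj _ hi₁ hi₁k hi₂ hi₂k hleft hright => ⟨?_, ?_⟩,
    fun j₁ j₂ hj₁ hj₁₂ hj₂k hle hlt => ⟨lt_jstar hj₁ (by omega) hlt, jstar_le (by omega) ?_⟩⟩
  · rcases hi₁.eq_or_lt with rfl | hi₁
    · exact one_le_istar hk₁
    · have hnot : ¬ aver a i₁ j < a (i₁ - 1) := not_lt.2 (hleft.resolve_left (by omega))
      exact not_lt.1 (mt (istar_lt_iff ha (by omega) hi₁ hi₁k).1 hnot)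
  · exact (istar_lt_iff ha (by omega) hi₂ hi₂k).2 hright
  · intro j hj hjk
    induction j, hj using Nat.le_induction with
    | base => exact hle
    | succ n hn ih =>
      exact aver_istar_succ_le hk₁ ha (by omega) (hmono3 _ (by omega) (by omega)) (ih (by omega))

theorem statement7
    (p k₁ k₂ k₃ : ℕ) (a : ℕ → ℝ)
    (hk₁ : 1 ≤ k₁) (hk₁₂ : k₁ < k₂) (hk₂₃ : k₂ ≤ k₃) (hk₃p : k₃ ≤ p)
    (hmono1 : ∀ i, 1 ≤ i → i + 1 ≤ k₁ → a i ≤ a (i + 1))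
    (hdec : ∀ i, k₁ ≤ i → i + 1 ≤ k₂ → a (i + 1) < a i)
    (hmono3 : ∀ i, k₂ ≤ i → i + 1 ≤ k₃ → a i ≤ a (i + 1)) :
    (∀ j i₁ i₂, k₂ ≤ j → j ≤ k₃ → 1 ≤ i₁ → i₁ ≤ k₁ → 2 ≤ i₂ → i₂ ≤ k₁ →
      (i₁ = 1 ∨ a (i₁ - 1) ≤ aver a i₁ j) → aver a i₂ j < a (i₂ - 1) →
      i₁ ≤ istar a k₁ j ∧ istar a k₁ j < i₂) ∧
    (∀ j₁ j₂, k₂ ≤ j₁ → j₁ < j₂ → j₂ + 1 ≤ k₃ →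
      aver a (istar a k₁ j₂) j₂ ≤ a (j₂ + 1) → a (j₁ + 1) < aver a (istar a k₁ j₁) j₁ →
      j₁ < jstar a k₁ k₂ k₃ ∧ jstar a k₁ k₂ k₃ ≤ j₂) :=
  statement7_general k₁ k₂ k₃ a hk₁ hk₁₂ hmono1 hmono3
end

section
/- In the continuous balance-point setting, assume in addition that G is continuous on [0, b₁) and on I₃. Then for every ε > 0: |T(v*(w*_{L,ε}), w*_{L,ε}; G) − T(v*, w*; G)| ≤ ε and |T(v*(w*_{R,ε}), w*_{R,ε}; G) − T(v*, w*; G)| ≤ ε. -/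
open MeasureTheory Set Filter Topology

/-- `I_T = I₁ ∪ I₂ ∪ I₃ = (0,b₁) ∪ [b₁,b₂] ∪ (b₂,b₃)`, where `b₃` may be `+∞`. -/
def ITset (b₁ b₂ : ℝ) (b₃ : EReal) : Set ℝ :=
  Ioo 0 b₁ ∪ Icc b₁ b₂ ∪ {y : ℝ | b₂ < y ∧ (y : EReal) < b₃}

/-- The conditioning set `[v,w] ∩ (I_T ∪ {0})` (with possibly infinite right endpoint). -/
def condSet (b₁ b₂ : ℝ) (b₃ : EReal) (v : ℝ) (w : EReal) : Set ℝ :=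
  {y : ℝ | v ≤ y ∧ (y : EReal) ≤ w} ∩ (ITset b₁ b₂ b₃ ∪ {0})

/-- The conditional expectation `T(v,w;G) = E[G(Y) | Y ∈ [v,w] ∩ (I_T ∪ {0})]`,
where `μ` is the law of `Y`. -/
noncomputable def condT (b₁ b₂ : ℝ) (b₃ : EReal) (G : ℝ → ℝ) (μ : Measure ℝ)
    (v : ℝ) (w : EReal) : ℝ :=
  (∫ y in condSet b₁ b₂ b₃ v w, G y ∂μ) / (μ (condSet b₁ b₂ b₃ v w)).toReal

/-- `V_{R,ε}(w) = {v ∈ I₁ : T(v,w;G) < G(v⁻) − ε}`. -/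
noncomputable def VR (b₁ b₂ : ℝ) (b₃ : EReal) (G : ℝ → ℝ) (μ : Measure ℝ)
    (ε : ℝ) (w : EReal) : Set ℝ :=
  {v | v ∈ Ioo 0 b₁ ∧ condT b₁ b₂ b₃ G μ v w < Function.leftLim G v - ε}

open Classical in
/-- `v*_{R,ε}(w)`. -/
noncomputable def vstarR (b₁ b₂ : ℝ) (b₃ : EReal) (G : ℝ → ℝ) (μ : Measure ℝ)
    (ε : ℝ) (w : EReal) : ℝ :=
  if (VR b₁ b₂ b₃ G μ ε w).Nonempty then sInf (VR b₁ b₂ b₃ G μ ε w) else b₁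

/-- The left balance point `v*(w) = v*_{R,0}(w)`. -/
noncomputable def vstar (b₁ b₂ : ℝ) (b₃ : EReal) (G : ℝ → ℝ) (μ : Measure ℝ)
    (w : EReal) : ℝ :=
  vstarR b₁ b₂ b₃ G μ 0 w

/-- `W_{L,ε} = {w ∈ I₃ : T(v*(w),w;G) > G(w⁺) + ε}`. -/
noncomputable def WL (b₁ b₂ : ℝ) (b₃ : EReal) (G : ℝ → ℝ) (μ : Measure ℝ)
    (ε : ℝ) : Set ℝ :=
  {w : ℝ | (b₂ < w ∧ (w : EReal) < b₃) ∧
    Function.rightLim G w + ε < condT b₁ b₂ b₃ G μ (vstar b₁ b₂ b₃ G μ w) w}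

open Classical in
/-- `w*_{L,ε}` (an extended real, since `W_{L,ε}` may be unbounded when `b₃ = ∞`). -/
noncomputable def wstarL (b₁ b₂ : ℝ) (b₃ : EReal) (G : ℝ → ℝ) (μ : Measure ℝ)
    (ε : ℝ) : EReal :=
  if (WL b₁ b₂ b₃ G μ ε).Nonempty
  then sSup ((fun x : ℝ => (x : EReal)) '' WL b₁ b₂ b₃ G μ ε)
  else (b₂ : EReal)

/-- The right balance point `w* = w*_{L,0}`. -/
noncomputable def wstar (b₁ b₂ : ℝ) (b₃ : EReal) (G : ℝ → ℝ) (μ : Measure ℝ) : EReal :=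
  wstarL b₁ b₂ b₃ G μ 0

/-- `v* = v*(w*)`. -/
noncomputable def vstarstar (b₁ b₂ : ℝ) (b₃ : EReal) (G : ℝ → ℝ) (μ : Measure ℝ) : ℝ :=
  vstar b₁ b₂ b₃ G μ (wstar b₁ b₂ b₃ G μ)

/-- `W_{R,ε} = {w ∈ I₃ : G(w) > T(v*,w*;G) + ε}`. -/
noncomputable def WR (b₁ b₂ : ℝ) (b₃ : EReal) (G : ℝ → ℝ) (μ : Measure ℝ)
    (ε : ℝ) : Set ℝ :=
  {w : ℝ | (b₂ < w ∧ (w : EReal) < b₃) ∧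
    condT b₁ b₂ b₃ G μ (vstarstar b₁ b₂ b₃ G μ) (wstar b₁ b₂ b₃ G μ) + ε < G w}

open Classical in
/-- `w*_{R,ε}` (equal to `b₃`, possibly infinite, when `W_{R,ε} = ∅`). -/
noncomputable def wstarR (b₁ b₂ : ℝ) (b₃ : EReal) (G : ℝ → ℝ) (μ : Measure ℝ)
    (ε : ℝ) : EReal :=
  if (WR b₁ b₂ b₃ G μ ε).Nonempty then ((sInf (WR b₁ b₂ b₃ G μ ε) : ℝ) : EReal) else b₃

/-!
Write `M(w) = T(v*(w), w; G)` (`condTStar`). The basic observation is that `v*(w)` maximises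
`T(·, w)` on `[0, b₁]`: below `v*(w)` every `u` has `G(u) ≤ T(u, w)`, and moving the left end
point to `u` only discards mass on which `G ≤ G(u)`; above `v*(w)` the points `u` of `V_{R,0}(w)`
have `T(u, w) < G(u)`, and moving the left end point to `u` only discards mass on which
`G ≥ G(u)`. At `v*(w)` itself one passes to the limit, using continuity of `G` and of `T` in
its end points.

Hence enlarging the window `[v*(a), a]` to `[v*(w), w]` amounts to averaging `M(a)` with values
of `G` on `(a, w]`: `M(w) ≤ max (M(a), sup G)` and `min (M(a), G(a)) ≤ M(w)`. As `G` is
nondecreasing on `I₃`, `W_{L,ε}` is an initial segment of `I₃` on which `M` is nonincreasing.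
On `(w*_{L,ε}, w*)` we have `G < M ≤ G + ε`, and on `(w*, w*_{R,ε})` we have
`M ≤ G ≤ T(v*, w*) + ε`; together with the two window inequalities and the right-continuity of
`T` in `w`, this keeps `M(w*_{L,ε})` and `M(w*_{R,ε})` within `ε` of `M(w*)`.
-/

section SetAverage

variable {α : Type*} [MeasurableSpace α] {μ : Measure α} {f : α → ℝ} {s t : Set α} {c : ℝ}

theorem setAverage_le_max_of_le_on_diff (hs : MeasurableSet s) (ht : MeasurableSet t)
    (hst : s ⊆ t) (hs₀ : μ s ≠ 0) (ht_fin : μ t ≠ ⊤) (hf : IntegrableOn f t μ)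
    (hc : ∀ x ∈ t \ s, f x ≤ c) :
    ⨍ x in t, f x ∂μ ≤ max (⨍ x in s, f x ∂μ) c := by
  set m := max (⨍ x in s, f x ∂μ) c
  have hs_fin : μ s ≠ ⊤ := ne_top_of_le_ne_top ht_fin (measure_mono hst)
  have hd_fin : μ (t \ s) ≠ ⊤ := ne_top_of_le_ne_top ht_fin (measure_mono sdiff_subset)
  have h_s : ∫ x in s, f x ∂μ ≤ μ.real s * m := by
    rw [← measure_smul_setAverage f hs_fin, smul_eq_mul]
    exact mul_le_mul_of_nonneg_left (le_max_left _ _) measureReal_nonneg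
  have h_d : ∫ x in t \ s, f x ∂μ ≤ μ.real (t \ s) * m :=
    calc ∫ x in t \ s, f x ∂μ ≤ ∫ _ in t \ s, c ∂μ :=
          setIntegral_mono_on (hf.mono_set sdiff_subset) (integrableOn_const hd_fin)
            (ht.diff hs) hc
      _ = μ.real (t \ s) * c := by rw [setIntegral_const, smul_eq_mul]
      _ ≤ μ.real (t \ s) * m := mul_le_mul_of_nonneg_left (le_max_right _ _) measureReal_nonneg
  have h_t : 0 < μ.real t :=
    ENNReal.toReal_pos (fun h => hs₀ (measure_mono_null hst h)) ht_fin
  rw [setAverage_eq, smul_eq_mul, inv_mul_le_iff₀ h_t, ← union_sdiff_cancel hst,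
    setIntegral_union disjoint_sdiff_right (ht.diff hs) (hf.mono_set hst)
      (hf.mono_set sdiff_subset),
    measureReal_union disjoint_sdiff_right (ht.diff hs) hs_fin hd_fin]
  linarith

theorem min_le_setAverage_of_le_on_diff (hs : MeasurableSet s) (ht : MeasurableSet t)
    (hst : s ⊆ t) (hs₀ : μ s ≠ 0) (ht_fin : μ t ≠ ⊤) (hf : IntegrableOn f t μ)
    (hc : ∀ x ∈ t \ s, c ≤ f x) :
    min (⨍ x in s, f x ∂μ) c ≤ ⨍ x in t, f x ∂μ := by
  have h := setAverage_le_max_of_le_on_diff (f := fun x => -f x) (c := -c) hs ht hst hs₀ ht_fin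
    hf.neg fun x hx => neg_le_neg (hc x hx)
  rw [average_neg, average_neg, max_neg_neg] at h
  exact neg_le_neg_iff.1 h

variable {ι : Type*} {l : Filter ι} [l.IsCountablyGenerated] {s : ι → Set α} {t : Set α}

theorem tendsto_setIntegral_of_tendsto_indicator (hf : Integrable f μ)
    (hs : ∀ i, MeasurableSet (s i)) (ht : MeasurableSet t)
    (hst : ∀ x, ∀ᶠ i in l, x ∈ s i ↔ x ∈ t) :
    Tendsto (fun i => ∫ x in s i, f x ∂μ) l (𝓝 (∫ x in t, f x ∂μ)) := by
  simp only [← integral_indicator (hs _), ← integral_indicator ht]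
  refine tendsto_integral_filter_of_dominated_convergence (fun x => ‖f x‖)
    (Eventually.of_forall fun i => hf.1.indicator (hs i)) (Eventually.of_forall fun i =>
      ae_of_all _ fun x => norm_indicator_le_norm_self f x) hf.norm (ae_of_all _ fun x => ?_)
  refine tendsto_const_nhds.congr' ?_
  filter_upwards [hst x] with i hi
  by_cases hx : x ∈ t
  · rw [indicator_of_mem hx, indicator_of_mem (hi.2 hx)]
  · rw [indicator_of_notMem hx, indicator_of_notMem (mt hi.1 hx)]

theorem tendsto_setAverage_of_tendsto_indicator [IsFiniteMeasure μ] (hf : Integrable f μ)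
    (hs : ∀ i, MeasurableSet (s i)) (ht : MeasurableSet t) (ht₀ : μ t ≠ 0)
    (hst : ∀ x, ∀ᶠ i in l, x ∈ s i ↔ x ∈ t) :
    Tendsto (fun i => ⨍ x in s i, f x ∂μ) l (𝓝 (⨍ x in t, f x ∂μ)) := by
  have h_meas : Tendsto (fun i => μ.real (s i)) l (𝓝 (μ.real t)) :=
    (ENNReal.tendsto_toReal (measure_ne_top μ t)).comp
      (tendsto_measure_of_tendsto_indicator_of_isFiniteMeasure l μ hs hst)
  simp only [setAverage_eq, smul_eq_mul]
  exact (h_meas.inv₀ (ENNReal.toReal_pos ht₀ (measure_ne_top μ t)).ne').mul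
    (tendsto_setIntegral_of_tendsto_indicator hf hs ht hst)

end SetAverage

theorem MonotoneOn.Ico_of_continuousOn {α β : Type*} [LinearOrder α] [TopologicalSpace α]
    [OrderTopology α] [DenselyOrdered α] [LinearOrder β] [TopologicalSpace β]
    [OrderClosedTopology β] {f : α → β} {a b : α} (hf : MonotoneOn f (Ioo a b))
    (hc : ContinuousOn f (Ico a b)) : MonotoneOn f (Ico a b) := by
  rcases lt_or_ge a b with hab | hba
  · rw [← Ioo_insert_left hab]
    refine hf.insert_of_continuousWithinAt ?_
      ((hc a (left_mem_Ico.2 hab)).mono Ioo_subset_Ico_self)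
    rw [← mem_closure_iff_clusterPt, closure_Ioo hab.ne]
    exact left_mem_Icc.2 hab.le
  · rw [Ico_eq_empty hba.not_gt]
    exact fun _ h => absurd h (notMem_empty _)

theorem EReal.exists_coe_of_coe_le_of_lt {b : ℝ} {x y : EReal} (hbx : (b : EReal) ≤ x)
    (hxy : x < y) : ∃ a : ℝ, x = a ∧ b ≤ a := by
  induction x using EReal.rec with
  | bot => exact absurd hbx (EReal.bot_lt_coe b).not_ge
  | coe a => exact ⟨a, rfl, EReal.coe_le_coe_iff.1 hbx⟩
  | top => exact absurd hxy not_top_lt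

theorem isOpen_I₃ {b₂ : ℝ} {b₃ : EReal} : IsOpen {y : ℝ | b₂ < y ∧ (y : EReal) < b₃} :=
  isOpen_Ioi.inter (isOpen_Iio.preimage continuous_coe_real_ereal)

section CondSet

variable {b₁ b₂ : ℝ} {b₃ : EReal} {G : ℝ → ℝ} {μ : Measure ℝ} {v u : ℝ} {w w' : EReal}

theorem measurableSet_condSet : MeasurableSet (condSet b₁ b₂ b₃ v w) := by
  have h_coe : Measurable fun y : ℝ => (y : EReal) := measurable_coe_real_ereal
  refine (measurableSet_Ici.inter (h_coe measurableSet_Iic)).inter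
    ((((measurableSet_Ioo.union measurableSet_Icc).union
      (measurableSet_Ioi.inter (h_coe measurableSet_Iio)))).union (measurableSet_singleton 0))

theorem Ioo_subset_condSet (hv : v ≤ b₁) (hw : (b₂ : EReal) ≤ w) :
    Ioo b₁ b₂ ⊆ condSet b₁ b₂ b₃ v w := fun _ hy =>
  ⟨⟨hv.trans hy.1.le, (EReal.coe_le_coe_iff.2 hy.2.le).trans hw⟩,
    .inl (.inl (.inr ⟨hy.1.le, hy.2.le⟩))⟩

theorem measure_condSet_ne_zero (hpos : 0 < μ (Ioo b₁ b₂)) (hv : v ≤ b₁)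
    (hw : (b₂ : EReal) ≤ w) : μ (condSet b₁ b₂ b₃ v w) ≠ 0 :=
  (hpos.trans_le (measure_mono (Ioo_subset_condSet hv hw))).ne'

theorem measure_condSet_inter_Ioi_ne_zero (hpos : 0 < μ (Ioo b₁ b₂)) (hv : v ≤ b₁)
    (hw : (b₂ : EReal) ≤ w) : μ (condSet b₁ b₂ b₃ v w ∩ Ioi v) ≠ 0 := by
  have h_sub : Ioo b₁ b₂ ⊆ condSet b₁ b₂ b₃ v w ∩ Ioi v := fun _ hy =>
    ⟨Ioo_subset_condSet hv hw hy, hv.trans_lt hy.1⟩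
  exact (hpos.trans_le (measure_mono h_sub)).ne'

theorem condT_eq_setAverage :
    condT b₁ b₂ b₃ G μ v w = ⨍ y in condSet b₁ b₂ b₃ v w, G y ∂μ := by
  rw [condT, setAverage_eq, smul_eq_mul, div_eq_inv_mul, measureReal_def]

theorem condSet_subset_condSet (hvu : v ≤ u) (hww' : w ≤ w') :
    condSet b₁ b₂ b₃ u w ⊆ condSet b₁ b₂ b₃ v w' :=
  fun _ hx => ⟨⟨hvu.trans hx.1.1, hx.1.2.trans hww'⟩, hx.2⟩

theorem mem_Ico_of_mem_condSet_diff (hb₁₂ : b₁ ≤ b₂) (hu : u ≤ b₁) {x : ℝ}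
    (hx : x ∈ condSet b₁ b₂ b₃ v w \ condSet b₁ b₂ b₃ u w) :
    x ∈ Ico 0 b₁ ∧ v ≤ x ∧ x < u := by
  obtain ⟨⟨⟨hvx, hxw⟩, hx_mem⟩, hx_not⟩ := hx
  have hxu : x < u := lt_of_not_ge fun h => hx_not ⟨⟨h, hxw⟩, hx_mem⟩
  refine ⟨?_, hvx, hxu⟩
  rcases hx_mem with ((h | h) | h) | rfl
  · exact Ioo_subset_Ico_self h
  · exact absurd (hxu.trans_le hu) h.1.not_gt
  · exact absurd ((hxu.trans_le (hu.trans hb₁₂)).trans h.1) (lt_irrefl x)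
  · exact ⟨le_rfl, hxu.trans_le hu⟩

theorem mem_I₃_of_mem_condSet_diff (hb₁ : 0 ≤ b₁) (hb₁₂ : b₁ ≤ b₂) (hw : (b₂ : EReal) ≤ w)
    {x : ℝ} (hx : x ∈ condSet b₁ b₂ b₃ v w' \ condSet b₁ b₂ b₃ v w) :
    (b₂ < x ∧ (x : EReal) < b₃) ∧ w < x ∧ (x : EReal) ≤ w' := by
  obtain ⟨⟨⟨hvx, hxw'⟩, hx_mem⟩, hx_not⟩ := hx
  have hwx : w < x := lt_of_not_ge fun h => hx_not ⟨⟨hvx, h⟩, hx_mem⟩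
  have hb₂x : b₂ < x := EReal.coe_lt_coe_iff.1 (hw.trans_lt hwx)
  refine ⟨?_, hwx, hxw'⟩
  rcases hx_mem with ((h | h) | h) | rfl
  · exact absurd (h.2.trans_le hb₁₂) hb₂x.not_gt
  · exact absurd h.2 hb₂x.not_ge
  · exact h
  · exact absurd (hb₁.trans hb₁₂) hb₂x.not_ge

end CondSet

section Continuity

variable {b₁ b₂ : ℝ} {b₃ : EReal} {G : ℝ → ℝ} {μ : Measure ℝ} [IsFiniteMeasure μ]
  {v : ℝ} {w : EReal}

theorem tendsto_condT_nhdsLT (hpos : 0 < μ (Ioo b₁ b₂)) (hG : Integrable G μ) (hv : v ≤ b₁)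
    (hw : (b₂ : EReal) ≤ w) :
    Tendsto (fun u => condT b₁ b₂ b₃ G μ u w) (𝓝[<] v) (𝓝 (condT b₁ b₂ b₃ G μ v w)) := by
  simp only [condT_eq_setAverage]
  refine tendsto_setAverage_of_tendsto_indicator hG (fun _ => measurableSet_condSet)
    measurableSet_condSet (measure_condSet_ne_zero hpos hv hw) fun x => ?_
  rcases le_or_gt v x with hvx | hxv
  · filter_upwards [self_mem_nhdsWithin] with u (hu : u < v)
    simp only [condSet, mem_inter_iff, mem_ofPred_eq, hvx, (hu.le.trans hvx)]
  · filter_upwards [Ioo_mem_nhdsLT hxv] with u hu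
    simp only [condSet, mem_inter_iff, mem_ofPred_eq, hu.1.not_ge, hxv.not_ge, false_and]

theorem tendsto_condT_nhdsGT (hpos : 0 < μ (Ioo b₁ b₂)) (hG : Integrable G μ) (hv : v ≤ b₁)
    (hw : (b₂ : EReal) ≤ w) :
    Tendsto (fun u => condT b₁ b₂ b₃ G μ u w) (𝓝[>] v)
      (𝓝 (⨍ y in condSet b₁ b₂ b₃ v w ∩ Ioi v, G y ∂μ)) := by
  simp only [condT_eq_setAverage]
  refine tendsto_setAverage_of_tendsto_indicator hG (fun _ => measurableSet_condSet)
    (measurableSet_condSet.inter measurableSet_Ioi)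
    (measure_condSet_inter_Ioi_ne_zero hpos hv hw) fun x => ?_
  rcases le_or_gt x v with hxv | hvx
  · filter_upwards [self_mem_nhdsWithin] with u (hu : v < u)
    simp only [condSet, mem_inter_iff, mem_ofPred_eq, mem_Ioi, (hxv.trans_lt hu).not_ge,
      hxv.not_gt, false_and, and_false]
  · filter_upwards [Ioo_mem_nhdsGT hvx] with u hu
    simp only [condSet, mem_inter_iff, mem_ofPred_eq, mem_Ioi, hu.2.le, hvx.le, hvx, and_true]

theorem min_setAverage_inter_Ioi_le_condT (hpos : 0 < μ (Ioo b₁ b₂)) (hG : Integrable G μ)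
    (hv : v ≤ b₁) (hw : (b₂ : EReal) ≤ w) :
    min (⨍ y in condSet b₁ b₂ b₃ v w ∩ Ioi v, G y ∂μ) (G v) ≤ condT b₁ b₂ b₃ G μ v w := by
  rw [condT_eq_setAverage]
  refine min_le_setAverage_of_le_on_diff (measurableSet_condSet.inter measurableSet_Ioi)
    measurableSet_condSet inter_subset_left (measure_condSet_inter_Ioi_ne_zero hpos hv hw)
    (measure_ne_top μ _) hG.integrableOn fun x hx => ?_
  exact le_of_eq (congrArg G (hx.1.1.1.antisymm (not_lt.1 fun h => hx.2 ⟨hx.1, h⟩)))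

theorem tendsto_condT_right_nhdsGT (hpos : 0 < μ (Ioo b₁ b₂)) (hG : Integrable G μ)
    (hv : v ≤ b₁) {a : ℝ} (ha : b₂ ≤ a) :
    Tendsto (fun z : ℝ => condT b₁ b₂ b₃ G μ v z) (𝓝[>] a) (𝓝 (condT b₁ b₂ b₃ G μ v a)) := by
  simp only [condT_eq_setAverage]
  refine tendsto_setAverage_of_tendsto_indicator hG (fun _ => measurableSet_condSet)
    measurableSet_condSet (measure_condSet_ne_zero hpos hv (EReal.coe_le_coe_iff.2 ha))
    fun x => ?_
  rcases le_or_gt x a with hxa | hax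
  · filter_upwards [self_mem_nhdsWithin] with z (hz : a < z)
    simp only [condSet, mem_inter_iff, mem_ofPred_eq, EReal.coe_le_coe_iff, hxa,
      hxa.trans hz.le]
  · filter_upwards [Ioo_mem_nhdsGT hax] with z hz
    simp only [condSet, mem_inter_iff, mem_ofPred_eq, EReal.coe_le_coe_iff, hz.2.not_ge,
      hax.not_ge, and_false, false_and]

end Continuity

structure ContinuousBalanceSetting (b₁ b₂ : ℝ) (b₃ : EReal) (G : ℝ → ℝ) (μ : Measure ℝ) :
    Prop where
  b₁_nonneg : 0 ≤ b₁
  b₁_le_b₂ : b₁ ≤ b₂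
  b₂_lt_b₃ : (b₂ : EReal) < b₃
  measure_Ioo_pos : 0 < μ (Ioo b₁ b₂)
  integrable : Integrable G μ
  monotoneOn_Ico : MonotoneOn G (Ico 0 b₁)
  continuousOn_Ico : ContinuousOn G (Ico 0 b₁)
  monotoneOn_I₃ : MonotoneOn G {y : ℝ | b₂ < y ∧ (y : EReal) < b₃}
  continuousOn_I₃ : ContinuousOn G {y : ℝ | b₂ < y ∧ (y : EReal) < b₃}

section Vstar

variable {b₁ b₂ : ℝ} {b₃ : EReal} {G : ℝ → ℝ} {μ : Measure ℝ} {u v : ℝ} {w : EReal}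

theorem vstar_le : vstar b₁ b₂ b₃ G μ w ≤ b₁ := by
  unfold vstar vstarR
  split_ifs with h
  · obtain ⟨x, hx⟩ := h
    exact (csInf_le ⟨0, fun y hy => hy.1.1.le⟩ hx).trans hx.1.2.le
  · exact le_rfl

theorem vstar_nonneg (hb₁ : 0 ≤ b₁) : 0 ≤ vstar b₁ b₂ b₃ G μ w := by
  unfold vstar vstarR
  split_ifs with h
  · exact le_csInf h fun x hx => hx.1.1.le
  · exact hb₁

theorem vstar_eq_csInf (h : (VR b₁ b₂ b₃ G μ 0 w).Nonempty) :
    vstar b₁ b₂ b₃ G μ w = sInf (VR b₁ b₂ b₃ G μ 0 w) := if_pos h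

theorem notMem_VR_of_lt_vstar (h : u < vstar b₁ b₂ b₃ G μ w) : u ∉ VR b₁ b₂ b₃ G μ 0 w := by
  intro hu
  rw [vstar_eq_csInf ⟨u, hu⟩] at h
  exact h.not_ge (csInf_le ⟨0, fun y hy => hy.1.1.le⟩ hu)

theorem mem_VR_zero_iff (hc : ContinuousOn G (Ico 0 b₁)) :
    u ∈ VR b₁ b₂ b₃ G μ 0 w ↔ u ∈ Ioo 0 b₁ ∧ condT b₁ b₂ b₃ G μ u w < G u := by
  refine and_congr_right fun hu => ?_
  rw [(hc.continuousAt (Ico_mem_nhds hu.1 hu.2)).continuousWithinAt.leftLim_eq, sub_zero]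

end Vstar

namespace ContinuousBalanceSetting

variable {b₁ b₂ : ℝ} {b₃ : EReal} {G : ℝ → ℝ} {μ : Measure ℝ} [IsFiniteMeasure μ]
  {u v : ℝ} {w : EReal}

theorem condT_le_condT_of_G_le (hS : ContinuousBalanceSetting b₁ b₂ b₃ G μ) (hu : u ∈ Ico 0 b₁)
    (hGu : G u ≤ condT b₁ b₂ b₃ G μ u w) (hvu : v ≤ u) (hw : (b₂ : EReal) ≤ w) :
    condT b₁ b₂ b₃ G μ v w ≤ condT b₁ b₂ b₃ G μ u w := by
  have h := setAverage_le_max_of_le_on_diff (s := condSet b₁ b₂ b₃ u w)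
    (t := condSet b₁ b₂ b₃ v w) (c := G u) measurableSet_condSet
    measurableSet_condSet (condSet_subset_condSet hvu le_rfl)
    (measure_condSet_ne_zero hS.measure_Ioo_pos hu.2.le hw) (measure_ne_top μ _)
    hS.integrable.integrableOn fun x hx => by
      obtain ⟨hx₀, -, hxu⟩ := mem_Ico_of_mem_condSet_diff hS.b₁_le_b₂ hu.2.le hx
      exact hS.monotoneOn_Ico hx₀ hu hxu.le
  rw [← condT_eq_setAverage, ← condT_eq_setAverage] at h
  exact h.trans (max_le le_rfl hGu)

theorem condT_le_condT_of_lt_G (hS : ContinuousBalanceSetting b₁ b₂ b₃ G μ) (hu : u ∈ Ico 0 b₁)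
    (hTu : condT b₁ b₂ b₃ G μ u w < G u) (huv : u ≤ v) (hv : v ≤ b₁) (hw : (b₂ : EReal) ≤ w) :
    condT b₁ b₂ b₃ G μ v w ≤ condT b₁ b₂ b₃ G μ u w := by
  have h := min_le_setAverage_of_le_on_diff (s := condSet b₁ b₂ b₃ v w)
    (t := condSet b₁ b₂ b₃ u w) (c := G u) measurableSet_condSet
    measurableSet_condSet (condSet_subset_condSet huv le_rfl)
    (measure_condSet_ne_zero hS.measure_Ioo_pos hv hw) (measure_ne_top μ _)
    hS.integrable.integrableOn fun x hx => by
      obtain ⟨hx₀, hux, -⟩ := mem_Ico_of_mem_condSet_diff hS.b₁_le_b₂ hv hx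
      exact hS.monotoneOn_Ico hu hx₀ hux
  rw [← condT_eq_setAverage, ← condT_eq_setAverage] at h
  exact (min_le_iff.1 h).resolve_right hTu.not_ge

theorem condT_le_condT_vstar_of_le (hS : ContinuousBalanceSetting b₁ b₂ b₃ G μ) (hv : 0 ≤ v)
    (hvv : v ≤ vstar b₁ b₂ b₃ G μ w) (hw : (b₂ : EReal) ≤ w) :
    condT b₁ b₂ b₃ G μ v w ≤ condT b₁ b₂ b₃ G μ (vstar b₁ b₂ b₃ G μ w) w := by
  rcases hvv.eq_or_lt with h | hlt
  · rw [h]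
  refine ge_of_tendsto (tendsto_condT_nhdsLT hS.measure_Ioo_pos hS.integrable vstar_le hw) ?_
  filter_upwards [Ioo_mem_nhdsLT hlt] with u hu
  have hu₀ : u ∈ Ioo 0 b₁ := ⟨hv.trans_lt hu.1, hu.2.trans_le vstar_le⟩
  have hGu : G u ≤ condT b₁ b₂ b₃ G μ u w :=
    not_lt.1 fun h => notMem_VR_of_lt_vstar hu.2 ((mem_VR_zero_iff hS.continuousOn_Ico).2 ⟨hu₀, h⟩)
  exact hS.condT_le_condT_of_G_le (Ioo_subset_Ico_self hu₀) hGu hu.1.le hw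

theorem condT_le_condT_vstar_of_lt (hS : ContinuousBalanceSetting b₁ b₂ b₃ G μ)
    (hlt : vstar b₁ b₂ b₃ G μ w < v) (hv : v ≤ b₁) (hw : (b₂ : EReal) ≤ w) :
    condT b₁ b₂ b₃ G μ v w ≤ condT b₁ b₂ b₃ G μ (vstar b₁ b₂ b₃ G μ w) w := by
  set V := VR b₁ b₂ b₃ G μ 0 w
  set v₀ := vstar b₁ b₂ b₃ G μ w
  have hne : V.Nonempty := by
    by_contra h
    exact (hlt.trans_le hv).ne (if_neg h)
  have hbdd : BddBelow V := ⟨0, fun y hy => hy.1.1.le⟩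
  have hv₀_eq : v₀ = sInf V := vstar_eq_csInf hne
  have hV : ∀ u ∈ V, u < v →
      condT b₁ b₂ b₃ G μ v w ≤ condT b₁ b₂ b₃ G μ u w ∧ condT b₁ b₂ b₃ G μ v w < G u := by
    intro u hu huv
    obtain ⟨hu₀, hTu⟩ := (mem_VR_zero_iff hS.continuousOn_Ico).1 hu
    have h := hS.condT_le_condT_of_lt_G (Ioo_subset_Ico_self hu₀) hTu huv.le hv hw
    exact ⟨h, h.trans_lt hTu⟩
  by_cases hv₀ : v₀ ∈ V
  · exact (hV v₀ hv₀ hlt).1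
  -- `v₀ = inf V` is not attained, so `V` accumulates at `v₀` from the right.
  have hV_Ioi : V ⊆ Ioi v₀ := fun u hu =>
    (hv₀_eq.trans_le (csInf_le hbdd hu)).lt_of_ne fun h => hv₀ (by rwa [h])
  have : (𝓝[V] v₀).NeBot := by
    rw [← mem_closure_iff_nhdsWithin_neBot, hv₀_eq]
    exact csInf_mem_closure hne hbdd
  have h_ev : ∀ᶠ u in 𝓝[V] v₀, u ∈ V ∧ u < v :=
    Eventually.and self_mem_nhdsWithin (nhdsWithin_le_nhds (eventually_lt_nhds hlt))
  have h_avg : condT b₁ b₂ b₃ G μ v w ≤ ⨍ y in condSet b₁ b₂ b₃ v₀ w ∩ Ioi v₀, G y ∂μ :=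
    ge_of_tendsto ((tendsto_condT_nhdsGT hS.measure_Ioo_pos hS.integrable vstar_le hw).mono_left
      (nhdsWithin_mono _ hV_Ioi)) (h_ev.mono fun u hu => (hV u hu.1 hu.2).1)
  have h_G : condT b₁ b₂ b₃ G μ v w ≤ G v₀ :=
    ge_of_tendsto (((hS.continuousOn_Ico v₀ ⟨vstar_nonneg hS.b₁_nonneg, hlt.trans_le hv⟩).mono
      fun u hu => Ioo_subset_Ico_self ((mem_VR_zero_iff hS.continuousOn_Ico).1 hu).1).tendsto)
      (h_ev.mono fun u hu => (hV u hu.1 hu.2).2.le)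
  exact (le_min h_avg h_G).trans
    (min_setAverage_inter_Ioi_le_condT hS.measure_Ioo_pos hS.integrable vstar_le hw)

end ContinuousBalanceSetting

noncomputable def condTStar (b₁ b₂ : ℝ) (b₃ : EReal) (G : ℝ → ℝ) (μ : Measure ℝ) (w : EReal) :
    ℝ :=
  condT b₁ b₂ b₃ G μ (vstar b₁ b₂ b₃ G μ w) w

section Wstar

variable {b₁ b₂ : ℝ} {b₃ : EReal} {G : ℝ → ℝ} {μ : Measure ℝ} {ε z : ℝ} {x : EReal}

theorem mem_WL_iff (hc : ContinuousOn G {y : ℝ | b₂ < y ∧ (y : EReal) < b₃}) :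
    z ∈ WL b₁ b₂ b₃ G μ ε ↔
      (b₂ < z ∧ (z : EReal) < b₃) ∧ G z + ε < condTStar b₁ b₂ b₃ G μ z := by
  refine and_congr_right fun hz => ?_
  rw [(hc.continuousAt (isOpen_I₃.mem_nhds hz)).continuousWithinAt.rightLim_eq]
  rfl

theorem le_wstarL (hz : z ∈ WL b₁ b₂ b₃ G μ ε) : (z : EReal) ≤ wstarL b₁ b₂ b₃ G μ ε := by
  rw [wstarL, if_pos ⟨z, hz⟩]
  exact le_sSup ⟨z, hz, rfl⟩

theorem b₂_le_wstarL : (b₂ : EReal) ≤ wstarL b₁ b₂ b₃ G μ ε := by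
  unfold wstarL
  split_ifs with h
  · obtain ⟨z, hz⟩ := h
    exact (EReal.coe_le_coe_iff.2 hz.1.1.le).trans (le_sSup ⟨z, hz, rfl⟩)
  · exact le_rfl

theorem wstarL_le (hx : (b₂ : EReal) ≤ x) (h : ∀ z ∈ WL b₁ b₂ b₃ G μ ε, (z : EReal) ≤ x) :
    wstarL b₁ b₂ b₃ G μ ε ≤ x := by
  unfold wstarL
  split_ifs
  · exact sSup_le fun _ ⟨z, hz, hzx⟩ => hzx ▸ h z hz
  · exact hx

theorem wstarL_le_wstar (hε : 0 ≤ ε) : wstarL b₁ b₂ b₃ G μ ε ≤ wstar b₁ b₂ b₃ G μ :=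
  wstarL_le b₂_le_wstarL fun _ hz => le_wstarL ⟨hz.1, by linarith [hz.2]⟩

theorem wstarR_le_b₃ : wstarR b₁ b₂ b₃ G μ ε ≤ b₃ := by
  unfold wstarR
  split_ifs with h
  · obtain ⟨z, hz⟩ := h
    exact (EReal.coe_le_coe_iff.2 (csInf_le ⟨b₂, fun r hr => hr.1.1.le⟩ hz)).trans hz.1.2.le
  · exact le_rfl

theorem notMem_WR_of_lt_wstarR (hz : (z : EReal) < wstarR b₁ b₂ b₃ G μ ε) :
    z ∉ WR b₁ b₂ b₃ G μ ε := fun hmem => by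
  rw [wstarR, if_pos ⟨z, hmem⟩, EReal.coe_lt_coe_iff] at hz
  exact hz.not_ge (csInf_le ⟨b₂, fun r hr => hr.1.1.le⟩ hmem)

end Wstar

namespace ContinuousBalanceSetting

variable {b₁ b₂ : ℝ} {b₃ : EReal} {G : ℝ → ℝ} {μ : Measure ℝ} [IsFiniteMeasure μ]
  {a c ε z : ℝ} {w : EReal}

theorem condT_le_condTStar (hS : ContinuousBalanceSetting b₁ b₂ b₃ G μ) {v : ℝ} (hv : 0 ≤ v)
    (hvb : v ≤ b₁) (hw : (b₂ : EReal) ≤ w) :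
    condT b₁ b₂ b₃ G μ v w ≤ condTStar b₁ b₂ b₃ G μ w :=
  (le_or_gt v (vstar b₁ b₂ b₃ G μ w)).elim (hS.condT_le_condT_vstar_of_le hv · hw)
    (hS.condT_le_condT_vstar_of_lt · hvb hw)

theorem condTStar_le_max (hS : ContinuousBalanceSetting b₁ b₂ b₃ G μ) (ha : b₂ ≤ a)
    (haw : (a : EReal) ≤ w) (hc : ∀ y : ℝ, a < y → (y : EReal) < w → G y ≤ c) :
    condTStar b₁ b₂ b₃ G μ w ≤ max (condTStar b₁ b₂ b₃ G μ a) c := by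
  set v := vstar b₁ b₂ b₃ G μ w
  have hb₂a : (b₂ : EReal) ≤ a := EReal.coe_le_coe_iff.2 ha
  -- the right end point `y = w` is reached by continuity of `G` on `I₃`
  have hc' : ∀ y ∈ condSet b₁ b₂ b₃ v w \ condSet b₁ b₂ b₃ v a, G y ≤ c := by
    intro y hy
    obtain ⟨hyI, hay, hyw⟩ := mem_I₃_of_mem_condSet_diff hS.b₁_nonneg hS.b₁_le_b₂ hb₂a hy
    rcases hyw.lt_or_eq with hyw | rfl
    · exact hc y (EReal.coe_lt_coe_iff.1 hay) hyw
    refine le_of_tendsto ((hS.continuousOn_I₃.continuousAt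
      (isOpen_I₃.mem_nhds hyI)).tendsto.mono_left (nhdsWithin_le_nhds : 𝓝[<] y ≤ 𝓝 y)) ?_
    filter_upwards [Ioo_mem_nhdsLT (EReal.coe_lt_coe_iff.1 hay)] with z hz
    exact hc z hz.1 (EReal.coe_lt_coe_iff.2 hz.2)
  have h := setAverage_le_max_of_le_on_diff measurableSet_condSet measurableSet_condSet
    (condSet_subset_condSet le_rfl haw) (measure_condSet_ne_zero hS.measure_Ioo_pos vstar_le hb₂a)
    (measure_ne_top μ _) hS.integrable.integrableOn hc'
  rw [← condT_eq_setAverage, ← condT_eq_setAverage] at h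
  exact h.trans (max_le_max_right c
    (hS.condT_le_condTStar (vstar_nonneg hS.b₁_nonneg) vstar_le hb₂a))

theorem min_le_condTStar (hS : ContinuousBalanceSetting b₁ b₂ b₃ G μ)
    (ha : b₂ < a ∧ (a : EReal) < b₃) (haw : (a : EReal) ≤ w) :
    min (condTStar b₁ b₂ b₃ G μ a) (G a) ≤ condTStar b₁ b₂ b₃ G μ w := by
  have hb₂a : (b₂ : EReal) ≤ a := EReal.coe_le_coe_iff.2 ha.1.le
  have h := min_le_setAverage_of_le_on_diff (s := condSet b₁ b₂ b₃ (vstar b₁ b₂ b₃ G μ a) a)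
    measurableSet_condSet measurableSet_condSet (condSet_subset_condSet le_rfl haw)
    (measure_condSet_ne_zero hS.measure_Ioo_pos vstar_le hb₂a) (measure_ne_top μ _)
    hS.integrable.integrableOn fun y hy => by
      obtain ⟨hyI, hay, -⟩ := mem_I₃_of_mem_condSet_diff hS.b₁_nonneg hS.b₁_le_b₂ hb₂a hy
      exact hS.monotoneOn_I₃ ha hyI (EReal.coe_lt_coe_iff.1 hay).le
  rw [← condT_eq_setAverage, ← condT_eq_setAverage] at h
  exact h.trans (hS.condT_le_condTStar (vstar_nonneg hS.b₁_nonneg) vstar_le (hb₂a.trans haw))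

theorem condTStar_le_of_eventually_le (hS : ContinuousBalanceSetting b₁ b₂ b₃ G μ)
    (ha : b₂ ≤ a) {X : ℝ} (h : ∀ᶠ z : ℝ in 𝓝[>] a, condTStar b₁ b₂ b₃ G μ z ≤ X) :
    condTStar b₁ b₂ b₃ G μ a ≤ X := by
  refine le_of_tendsto (tendsto_condT_right_nhdsGT hS.measure_Ioo_pos hS.integrable vstar_le ha) ?_
  filter_upwards [h, self_mem_nhdsWithin] with z hz (haz : a < z)
  exact (hS.condT_le_condTStar (vstar_nonneg hS.b₁_nonneg) vstar_le
    (EReal.coe_le_coe_iff.2 (ha.trans haz.le))).trans hz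

theorem condTStar_le_of_mem_WL (hS : ContinuousBalanceSetting b₁ b₂ b₃ G μ)
    {w : ℝ} (hw : w ∈ WL b₁ b₂ b₃ G μ 0) (ha : b₂ ≤ a) (haw : a < w) :
    condTStar b₁ b₂ b₃ G μ w ≤ condTStar b₁ b₂ b₃ G μ a := by
  obtain ⟨hwI, hGw⟩ := (mem_WL_iff hS.continuousOn_I₃).1 hw
  have h := hS.condTStar_le_max ha (EReal.coe_le_coe_iff.2 haw.le) fun y hay hyw =>
    hS.monotoneOn_I₃ ⟨ha.trans_lt hay, hyw.trans hwI.2⟩ hwI (EReal.coe_lt_coe_iff.1 hyw).le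
  exact (le_max_iff.1 h).resolve_right (by linarith)

theorem mem_WL_of_lt (hS : ContinuousBalanceSetting b₁ b₂ b₃ G μ) (hε : 0 ≤ ε) {w : ℝ}
    (hw : w ∈ WL b₁ b₂ b₃ G μ ε) (hz : b₂ < z) (hzw : z < w) : z ∈ WL b₁ b₂ b₃ G μ ε := by
  obtain ⟨hwI, hGw⟩ := (mem_WL_iff hS.continuousOn_I₃).1 hw
  have hzI : b₂ < z ∧ (z : EReal) < b₃ := ⟨hz, (EReal.coe_lt_coe_iff.2 hzw).trans hwI.2⟩
  have h_anti := hS.condTStar_le_of_mem_WL ⟨hwI, by linarith [hw.2]⟩ hz.le hzw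
  have h_mono := hS.monotoneOn_I₃ hzI hwI hzw.le
  exact (mem_WL_iff hS.continuousOn_I₃).2 ⟨hzI, by linarith⟩

theorem G_le_condTStar_of_mem_WL (hS : ContinuousBalanceSetting b₁ b₂ b₃ G μ)
    (hz : z ∈ WL b₁ b₂ b₃ G μ 0) (hzw : (z : EReal) ≤ w) : G z ≤ condTStar b₁ b₂ b₃ G μ w := by
  obtain ⟨hzI, hGz⟩ := (mem_WL_iff hS.continuousOn_I₃).1 hz
  have h := hS.min_le_condTStar hzI hzw
  rwa [min_eq_right (by linarith)] at h

theorem mem_WL_of_lt_wstarL (hS : ContinuousBalanceSetting b₁ b₂ b₃ G μ) (hε : 0 ≤ ε)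
    (hz : b₂ < z) (hzw : (z : EReal) < wstarL b₁ b₂ b₃ G μ ε) : z ∈ WL b₁ b₂ b₃ G μ ε := by
  unfold wstarL at hzw
  split_ifs at hzw
  · obtain ⟨_, ⟨y, hy, rfl⟩, hzy⟩ := lt_sSup_iff.1 hzw
    exact hS.mem_WL_of_lt hε hy hz (EReal.coe_lt_coe_iff.1 hzy)
  · exact absurd (EReal.coe_lt_coe_iff.1 hzw) hz.not_gt

theorem wstar_le_wstarR (hS : ContinuousBalanceSetting b₁ b₂ b₃ G μ) (hε : 0 ≤ ε) :
    wstar b₁ b₂ b₃ G μ ≤ wstarR b₁ b₂ b₃ G μ ε := by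
  unfold wstarR
  split_ifs with h
  · have hb₂ : ∀ r ∈ WR b₁ b₂ b₃ G μ ε, b₂ ≤ r := fun r hr => hr.1.1.le
    refine wstarL_le (EReal.coe_le_coe_iff.2 (le_csInf h hb₂)) fun u hu =>
      EReal.coe_le_coe_iff.2 (le_csInf h fun r hr => not_lt.1 fun hru => ?_)
    have hrW : r ∈ WL b₁ b₂ b₃ G μ 0 := hS.mem_WL_of_lt le_rfl hu hr.1.1 hru
    exact (hr.2.trans_le (hS.G_le_condTStar_of_mem_WL hrW (le_wstarL hrW))).not_ge
      (le_add_of_nonneg_right hε)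
  · exact wstarL_le hS.b₂_lt_b₃.le fun z hz => hz.1.2.le

theorem abs_condTStar_wstarL_sub_le (hS : ContinuousBalanceSetting b₁ b₂ b₃ G μ) (hε : 0 ≤ ε) :
    |condTStar b₁ b₂ b₃ G μ (wstarL b₁ b₂ b₃ G μ ε) - condTStar b₁ b₂ b₃ G μ (wstar b₁ b₂ b₃ G μ)|
      ≤ ε := by
  rcases (wstarL_le_wstar hε).eq_or_lt with h | hlt
  · rwa [h, sub_self, abs_zero]
  obtain ⟨a, ha, hb₂a⟩ := EReal.exists_coe_of_coe_le_of_lt b₂_le_wstarL hlt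
  rw [ha] at hlt ⊢
  have h_lower : condTStar b₁ b₂ b₃ G μ (wstar b₁ b₂ b₃ G μ) ≤ condTStar b₁ b₂ b₃ G μ a := by
    refine (hS.condTStar_le_max hb₂a hlt.le fun y hay hyw => ?_).trans (max_self _).le
    have hy : y ∈ WL b₁ b₂ b₃ G μ 0 := hS.mem_WL_of_lt_wstarL le_rfl (hb₂a.trans_lt hay) hyw
    linarith [((mem_WL_iff hS.continuousOn_I₃).1 hy).2, hS.condTStar_le_of_mem_WL hy hb₂a hay]
  have h_upper : condTStar b₁ b₂ b₃ G μ a ≤ condTStar b₁ b₂ b₃ G μ (wstar b₁ b₂ b₃ G μ) + ε := by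
    refine hS.condTStar_le_of_eventually_le hb₂a ?_
    obtain ⟨r, har, hrw⟩ := EReal.lt_iff_exists_real_btwn.1 hlt
    filter_upwards [Ioo_mem_nhdsGT (EReal.coe_lt_coe_iff.1 har)] with z hz
    have hz₀ : z ∈ WL b₁ b₂ b₃ G μ 0 := hS.mem_WL_of_lt_wstarL le_rfl (hb₂a.trans_lt hz.1)
      ((EReal.coe_lt_coe_iff.2 hz.2).trans hrw)
    have hzε : z ∉ WL b₁ b₂ b₃ G μ ε := fun h =>
      (le_wstarL h).not_gt (ha ▸ EReal.coe_lt_coe_iff.2 hz.1)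
    rw [mem_WL_iff hS.continuousOn_I₃, not_and, not_lt] at hzε
    have hGz : G z ≤ condTStar b₁ b₂ b₃ G μ (wstar b₁ b₂ b₃ G μ) :=
      hS.G_le_condTStar_of_mem_WL hz₀ (le_wstarL hz₀)
    linarith [hzε hz₀.1]
  exact abs_sub_le_iff.2 ⟨by linarith, by linarith⟩

theorem abs_condTStar_wstarR_sub_le (hS : ContinuousBalanceSetting b₁ b₂ b₃ G μ) (hε : 0 ≤ ε) :
    |condTStar b₁ b₂ b₃ G μ (wstarR b₁ b₂ b₃ G μ ε) - condTStar b₁ b₂ b₃ G μ (wstar b₁ b₂ b₃ G μ)|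
      ≤ ε := by
  rcases (hS.wstar_le_wstarR hε).eq_or_lt with h | hlt
  · rwa [h, sub_self, abs_zero]
  obtain ⟨a, ha, hb₂a⟩ :=
    EReal.exists_coe_of_coe_le_of_lt (x := wstar b₁ b₂ b₃ G μ) b₂_le_wstarL hlt
  have hT : condT b₁ b₂ b₃ G μ (vstarstar b₁ b₂ b₃ G μ) (wstar b₁ b₂ b₃ G μ)
      = condTStar b₁ b₂ b₃ G μ a := by rw [vstarstar, ha]; rfl
  rw [ha] at hlt ⊢
  have h_upper : condTStar b₁ b₂ b₃ G μ (wstarR b₁ b₂ b₃ G μ ε)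
      ≤ condTStar b₁ b₂ b₃ G μ a + ε := by
    refine (hS.condTStar_le_max hb₂a hlt.le fun y hay hyw => ?_).trans
      (max_le (by linarith) le_rfl)
    have hy := notMem_WR_of_lt_wstarR hyw
    rw [WR, mem_ofPred_eq, not_and, not_lt, hT] at hy
    exact hy ⟨hb₂a.trans_lt hay, hyw.trans_le wstarR_le_b₃⟩
  have h_lower : condTStar b₁ b₂ b₃ G μ a ≤ condTStar b₁ b₂ b₃ G μ (wstarR b₁ b₂ b₃ G μ ε) := by
    refine hS.condTStar_le_of_eventually_le hb₂a ?_
    obtain ⟨r, har, hrw⟩ := EReal.lt_iff_exists_real_btwn.1 hlt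
    filter_upwards [Ioo_mem_nhdsGT (EReal.coe_lt_coe_iff.1 har)] with z hz
    have hzw : (z : EReal) < wstarR b₁ b₂ b₃ G μ ε := (EReal.coe_lt_coe_iff.2 hz.2).trans hrw
    have hzI : b₂ < z ∧ (z : EReal) < b₃ := ⟨hb₂a.trans_lt hz.1, hzw.trans_le wstarR_le_b₃⟩
    have hz₀ : z ∉ WL b₁ b₂ b₃ G μ 0 := fun h =>
      (le_wstarL h).not_gt (show wstar b₁ b₂ b₃ G μ < z from ha ▸ EReal.coe_lt_coe_iff.2 hz.1)
    rw [mem_WL_iff hS.continuousOn_I₃, not_and, not_lt, add_zero] at hz₀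
    have h := hS.min_le_condTStar hzI hzw.le
    rwa [min_eq_left (hz₀ hzI)] at h
  exact abs_sub_le_iff.2 ⟨by linarith, by linarith⟩

end ContinuousBalanceSetting

theorem statement13_general
    (b₁ b₂ : ℝ) (b₃ : EReal) (G : ℝ → ℝ) (μ : Measure ℝ)
    (hb₁ : 0 ≤ b₁) (hb₁₂ : b₁ < b₂) (hb₂₃ : (b₂ : EReal) < b₃)
    (hμ : IsProbabilityMeasure μ)
    (hGint : Integrable G μ)
    (hfull : ∀ a b : ℝ, a < b → Ioo a b ⊆ ITset b₁ b₂ b₃ → 0 < μ (Ioo a b))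
    (hG1 : MonotoneOn G (Ioo 0 b₁))
    (hG3 : MonotoneOn G {y : ℝ | b₂ < y ∧ (y : EReal) < b₃})
    (hGc1 : ContinuousOn G (Ico 0 b₁))
    (hGc3 : ContinuousOn G {y : ℝ | b₂ < y ∧ (y : EReal) < b₃}) :
    ∀ ε : ℝ, 0 < ε →
      |condT b₁ b₂ b₃ G μ (vstar b₁ b₂ b₃ G μ (wstarL b₁ b₂ b₃ G μ ε))
          (wstarL b₁ b₂ b₃ G μ ε)
        - condT b₁ b₂ b₃ G μ (vstarstar b₁ b₂ b₃ G μ) (wstar b₁ b₂ b₃ G μ)| ≤ ε ∧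
      |condT b₁ b₂ b₃ G μ (vstar b₁ b₂ b₃ G μ (wstarR b₁ b₂ b₃ G μ ε))
          (wstarR b₁ b₂ b₃ G μ ε)
        - condT b₁ b₂ b₃ G μ (vstarstar b₁ b₂ b₃ G μ) (wstar b₁ b₂ b₃ G μ)| ≤ ε := by
  intro ε hε
  have hS : ContinuousBalanceSetting b₁ b₂ b₃ G μ :=
    { b₁_nonneg := hb₁
      b₁_le_b₂ := hb₁₂.le
      b₂_lt_b₃ := hb₂₃
      measure_Ioo_pos := hfull b₁ b₂ hb₁₂ fun y hy => .inl (.inr ⟨hy.1.le, hy.2.le⟩)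
      integrable := hGint
      monotoneOn_Ico := hG1.Ico_of_continuousOn hGc1
      continuousOn_Ico := hGc1
      monotoneOn_I₃ := hG3
      continuousOn_I₃ := hGc3 }
  exact ⟨hS.abs_condTStar_wstarL_sub_le hε.le, hS.abs_condTStar_wstarR_sub_le hε.le⟩

theorem statement13
    (b₁ b₂ : ℝ) (b₃ : EReal) (G : ℝ → ℝ) (μ : Measure ℝ)
    (hb₁ : 0 ≤ b₁) (hb₁₂ : b₁ < b₂) (hb₂₃ : (b₂ : EReal) < b₃)
    (hμ : IsProbabilityMeasure μ) (hμneg : μ (Iio 0) = 0)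
    (hGint : Integrable G μ)
    (hfull : ∀ a b : ℝ, a < b → Ioo a b ⊆ ITset b₁ b₂ b₃ → 0 < μ (Ioo a b))
    (hG1 : MonotoneOn G (Ioo 0 b₁))
    (hG2 : StrictAntiOn G (Icc b₁ b₂))
    (hG3 : MonotoneOn G {y : ℝ | b₂ < y ∧ (y : EReal) < b₃})
    (hGc1 : ContinuousOn G (Ico 0 b₁))
    (hGc3 : ContinuousOn G {y : ℝ | b₂ < y ∧ (y : EReal) < b₃}) :
    ∀ ε : ℝ, 0 < ε →
      |condT b₁ b₂ b₃ G μ (vstar b₁ b₂ b₃ G μ (wstarL b₁ b₂ b₃ G μ ε))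
          (wstarL b₁ b₂ b₃ G μ ε)
        - condT b₁ b₂ b₃ G μ (vstarstar b₁ b₂ b₃ G μ) (wstar b₁ b₂ b₃ G μ)| ≤ ε ∧
      |condT b₁ b₂ b₃ G μ (vstar b₁ b₂ b₃ G μ (wstarR b₁ b₂ b₃ G μ ε))
          (wstarR b₁ b₂ b₃ G μ ε)
        - condT b₁ b₂ b₃ G μ (vstarstar b₁ b₂ b₃ G μ) (wstar b₁ b₂ b₃ G μ)| ≤ ε :=
  statement13_general b₁ b₂ b₃ G μ hb₁ hb₁₂ hb₂₃ hμ hGint hfull hG1 hG3 hGc1 hGc3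
end
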